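/- arXiv:1508.06899 — 2 statements merged into one kernel-verified Lean document; each statement's English description precedes it below -/
import Mathlib

section
/- Bisimulation equivalence is a congruence with respect to the operators of ctBPAps: for all closed ctBPAps process terms p,q,p′,q′ and every proposition φ, if p ↔ q and p′ ↔ q′ then p+p′ ↔ q+q′, p·p′ ↔ q·q′, φ:→p ↔ φ:→q, and φ⌃p ↔ φ⌃q. -/
set_option autoImplicit true
set_option maxHeartbeats 1000000

/-- The three truth values of LP→⊥: true, false, both. -/
inductive V3 : Type
  | t
  | f
  | b
  deriving DecidableEq

/-- Formulas of LP→⊥ over propositional variables of type `α`. -/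
inductive Fml (α : Type) : Type
  | var : α → Fml α
  | bot : Fml α
  | neg : Fml α → Fml α
  | conj : Fml α → Fml α → Fml α
  | disj : Fml α → Fml α → Fml α
  | imp : Fml α → Fml α → Fml α

namespace Fml

/-- ⊤ abbreviates ¬⊥. -/
def top {α : Type} : Fml α := neg bot

/-- A↔B abbreviates (A→B)∧(B→A). -/
def iff' {α : Type} (A B : Fml α) : Fml α := conj (imp A B) (imp B A)

end Fml

/-- LP→⊥ truth table for negation. -/
def negT : V3 → V3
  | .f => .t
  | .t => .f
  | .b => .b

/-- LP→⊥ truth table for conjunction. -/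
def conjT : V3 → V3 → V3
  | .f, _ => .f
  | _, .f => .f
  | .t, .t => .t
  | _, _ => .b

/-- LP→⊥ truth table for disjunction. -/
def disjT : V3 → V3 → V3
  | .t, _ => .t
  | _, .t => .t
  | .f, .f => .f
  | _, _ => .b

/-- LP→⊥ truth table for implication. -/
def impT : V3 → V3 → V3
  | .f, _ => .t
  | _, y => y

/-- The LP→⊥ valuation determined by an assignment `σ` of truth values to variables. -/
def eval {α : Type} (σ : α → V3) : Fml α → V3
  | .var x => σ x
  | .bot => .f
  | .neg A => negT (eval σ A)
  | .conj A B => conjT (eval σ A) (eval σ B)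
  | .disj A B => disjT (eval σ A) (eval σ B)
  | .imp A B => impT (eval σ A) (eval σ B)

/-- Logical equivalence in LP→⊥: the same value under every valuation. -/
def FEquiv {α : Type} (A B : Fml α) : Prop := ∀ σ : α → V3, eval σ A = eval σ B

/-- `φ ∈ [⊥]`: `φ` is logically equivalent to ⊥. -/
def EqBot {α : Type} (φ : Fml α) : Prop := ∀ σ : α → V3, eval σ φ = V3.f

/-- Semantic consequence in LP→⊥ (designated values t and b). -/
def SemCons {α : Type} (Γ : Set (Fml α)) (A : Fml α) : Prop :=
  ∀ σ : α → V3, (∀ C ∈ Γ, eval σ C ≠ V3.f) → eval σ A ≠ V3.f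

/-- The Hilbert system of LP→⊥, with hypotheses `Γ`. -/
inductive Hilb {α : Type} (Γ : Set (Fml α)) : Fml α → Prop
  | hyp {A : Fml α} : A ∈ Γ → Hilb Γ A
  | mp {A B : Fml α} : Hilb Γ (A.imp B) → Hilb Γ A → Hilb Γ B
  | ax1 (A B : Fml α) : Hilb Γ (A.imp (B.imp A))
  | ax2 (A B C : Fml α) : Hilb Γ ((A.imp (B.imp C)).imp ((A.imp B).imp (A.imp C)))
  | ax3 (A B : Fml α) : Hilb Γ (((A.imp B).imp A).imp A)
  | ax4 (A : Fml α) : Hilb Γ (Fml.bot.imp A)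
  | ax5 (A B : Fml α) : Hilb Γ ((A.conj B).imp A)
  | ax6 (A B : Fml α) : Hilb Γ ((A.conj B).imp B)
  | ax7 (A B : Fml α) : Hilb Γ (A.imp (B.imp (A.conj B)))
  | ax8 (A B : Fml α) : Hilb Γ (A.imp (A.disj B))
  | ax9 (A B : Fml α) : Hilb Γ (B.imp (A.disj B))
  | ax10 (A B C : Fml α) : Hilb Γ ((A.imp C).imp ((B.imp C).imp ((A.disj B).imp C)))
  | ax11 (A : Fml α) : Hilb Γ (Fml.iff' A.neg.neg A)
  | ax12 (A B : Fml α) : Hilb Γ (Fml.iff' (A.imp B).neg (A.conj B.neg))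
  | ax13 (A B : Fml α) : Hilb Γ (Fml.iff' (A.conj B).neg (A.neg.disj B.neg))
  | ax14 (A B : Fml α) : Hilb Γ (Fml.iff' (A.disj B).neg (A.neg.conj B.neg))
  | ax15 (A : Fml α) : Hilb Γ (A.disj A.neg)

/-- The internalization (A↔B)∧(¬A↔¬B) of logical equivalence. -/
def InternEq {α : Type} (φ ψ : Fml α) : Fml α :=
  (Fml.iff' φ ψ).conj (Fml.iff' φ.neg ψ.neg)

/-- Derivable equality of propositions: the least congruence containing the
instances of axiom IMP (φ = ψ whenever ⊢ (φ↔ψ)∧(¬φ↔¬ψ)). -/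
inductive PropEq {α : Type} : Fml α → Fml α → Prop
  | imp {φ ψ} : Hilb (∅ : Set (Fml α)) (InternEq φ ψ) → PropEq φ ψ
  | refl (φ) : PropEq φ φ
  | symm {φ ψ} : PropEq φ ψ → PropEq ψ φ
  | trans {φ ψ χ} : PropEq φ ψ → PropEq ψ χ → PropEq φ χ
  | negC {φ ψ} : PropEq φ ψ → PropEq φ.neg ψ.neg
  | conjC {φ ψ φ' ψ'} : PropEq φ ψ → PropEq φ' ψ' → PropEq (φ.conj φ') (ψ.conj ψ')
  | disjC {φ ψ φ' ψ'} : PropEq φ ψ → PropEq φ' ψ' → PropEq (φ.disj φ') (ψ.disj ψ')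
  | impC {φ ψ φ' ψ'} : PropEq φ ψ → PropEq φ' ψ' → PropEq (φ.imp φ') (ψ.imp ψ')

/-- Closed ctBPAps process terms over atomic propositions `α` and actions `Act`
(δ is the separate constructor `delta`, ⊗ is `nex`, `gc` is the guarded command
φ:→p and `se` is the signal emission φ⌃p). -/
inductive PT (α Act : Type) : Type
  | act : Act → PT α Act
  | delta : PT α Act
  | nex : PT α Act
  | alt : PT α Act → PT α Act → PT α Act
  | seq : PT α Act → PT α Act → PT α Act
  | gc : Fml α → PT α Act → PT α Act
  | se : Fml α → PT α Act → PT α Act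

section
variable {α Act : Type}

/-- Derivable equality from the axioms of ctBPAps: the least congruence
satisfying A1-A7, NE1-NE3, GC1-GC7, SE1-SE8 and IMP. -/
inductive Deriv : PT α Act → PT α Act → Prop
  | refl (p : PT α Act) : Deriv p p
  | symm {p q} : Deriv p q → Deriv q p
  | trans {p q r} : Deriv p q → Deriv q r → Deriv p r
  | altC {p q p' q'} : Deriv p q → Deriv p' q' → Deriv (.alt p p') (.alt q q')
  | seqC {p q p' q'} : Deriv p q → Deriv p' q' → Deriv (.seq p p') (.seq q q')
  | gcC {φ ψ p q} : PropEq φ ψ → Deriv p q → Deriv (.gc φ p) (.gc ψ q)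
  | seC {φ ψ p q} : PropEq φ ψ → Deriv p q → Deriv (.se φ p) (.se ψ q)
  | A1 (x y : PT α Act) : Deriv (.alt x y) (.alt y x)
  | A2 (x y z : PT α Act) : Deriv (.alt (.alt x y) z) (.alt x (.alt y z))
  | A3 (x : PT α Act) : Deriv (.alt x x) x
  | A4 (x y z : PT α Act) : Deriv (.seq (.alt x y) z) (.alt (.seq x z) (.seq y z))
  | A5 (x y z : PT α Act) : Deriv (.seq (.seq x y) z) (.seq x (.seq y z))
  | A6 (x : PT α Act) : Deriv (.alt x .delta) x
  | A7 (x : PT α Act) : Deriv (.seq .delta x) .delta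
  | NE1 (x : PT α Act) : Deriv (.alt x .nex) .nex
  | NE2 (x : PT α Act) : Deriv (.seq .nex x) .nex
  | NE3 (a : Act) : Deriv (.seq (.act a) .nex) .delta
  | NE3d : Deriv (.seq (.delta : PT α Act) .nex) .delta
  | GC1 (x : PT α Act) : Deriv (.gc Fml.top x) x
  | GC2 (x : PT α Act) : Deriv (.gc .bot x) .delta
  | GC3 (φ : Fml α) : Deriv (.gc φ .delta) (.delta : PT α Act)
  | GC4 (φ : Fml α) (x y : PT α Act) :
      Deriv (.gc φ (.alt x y)) (.alt (.gc φ x) (.gc φ y))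
  | GC5 (φ : Fml α) (x y : PT α Act) : Deriv (.gc φ (.seq x y)) (.seq (.gc φ x) y)
  | GC6 (φ ψ : Fml α) (x : PT α Act) : Deriv (.gc φ (.gc ψ x)) (.gc (φ.conj ψ) x)
  | GC7 (φ ψ : Fml α) (x : PT α Act) :
      Deriv (.gc (φ.disj ψ) x) (.alt (.gc φ x) (.gc ψ x))
  | SE1 (x : PT α Act) : Deriv (.se Fml.top x) x
  | SE2 (x : PT α Act) : Deriv (.se .bot x) .nex
  | SE3 (φ : Fml α) : Deriv (.se φ .nex) (.nex : PT α Act)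
  | SE4 (φ : Fml α) (x y : PT α Act) : Deriv (.alt (.se φ x) y) (.se φ (.alt x y))
  | SE5 (φ : Fml α) (x y : PT α Act) : Deriv (.seq (.se φ x) y) (.se φ (.seq x y))
  | SE6 (φ ψ : Fml α) (x : PT α Act) : Deriv (.se φ (.se ψ x)) (.se (φ.conj ψ) x)
  | SE7 (φ : Fml α) (x : PT α Act) : Deriv (.se φ (.gc φ x)) (.se φ x)
  | SE8 (φ ψ : Fml α) (x : PT α Act) :
      Deriv (.gc φ (.se ψ x)) (.se (φ.imp ψ) (.gc φ x))

/-- Basic terms of ctBPAps. -/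
inductive Basic : PT α Act → Prop
  | nex : Basic (.nex : PT α Act)
  | emiDelta {φ : Fml α} : ¬ EqBot φ → Basic (.se φ .delta)
  | gcAct {φ : Fml α} (a : Act) : ¬ EqBot φ → Basic (.gc φ (.act a))
  | gcSeq {φ : Fml α} (a : Act) {p : PT α Act} :
      ¬ EqBot φ → Basic p → Basic (.gc φ (.seq (.act a) p))
  | alt {p q : PT α Act} : Basic p → Basic q → Basic (.alt p q)

/-- The signal (root signal) emitted by a process term. -/
def sig : PT α Act → Fml α
  | .act _ => Fml.top
  | .delta => Fml.top
  | .nex => .bot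
  | .alt p q => (sig p).conj (sig q)
  | .seq p _ => sig p
  | .gc φ p => φ.imp (sig p)
  | .se φ p => φ.conj (sig p)

/-- The structural operational semantics of ctBPAps: `Tr p φ a (some q)` is the
action step p –φ,a→ q and `Tr p φ a none` is the action termination p –φ,a→ √. -/
inductive Tr : PT α Act → Fml α → Act → Option (PT α Act) → Prop
  | act (a : Act) : Tr (.act a) Fml.top a none
  | altL {x φ a o} (y : PT α Act) :
      Tr x φ a o → ¬ EqBot (sig (PT.alt x y)) → Tr (.alt x y) φ a o
  | altR {y φ a o} (x : PT α Act) :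
      Tr y φ a o → ¬ EqBot (sig (PT.alt x y)) → Tr (.alt x y) φ a o
  | seqT {x φ a} (y : PT α Act) :
      Tr x φ a none → ¬ EqBot (sig y) → Tr (.seq x y) φ a (some y)
  | seqS {x φ a x'} (y : PT α Act) :
      Tr x φ a (some x') → Tr (.seq x y) φ a (some (.seq x' y))
  | gcR {x φ a o} (ψ : Fml α) :
      Tr x φ a o → ¬ EqBot (φ.conj ψ) → Tr (.gc ψ x) (φ.conj ψ) a o
  | seR {x φ a o} (ψ : Fml α) :
      Tr x φ a o → ¬ EqBot (sig (PT.se ψ x)) → Tr (.se ψ x) φ a o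

/-- Lift a relation on process terms to their optional (√-extended) targets. -/
def OptR (R : PT α Act → PT α Act → Prop) : Option (PT α Act) → Option (PT α Act) → Prop
  | none, none => True
  | some p, some q => R p q
  | _, _ => False

/-- The (one-directional) simulation conditions of a splitting bisimulation. -/
def Sim (R : PT α Act → PT α Act → Prop) (p q : PT α Act) : Prop :=
  (∀ φ a o, Tr p φ a o →
    ∀ σ : α → V3, eval σ (sig p) ≠ V3.f → eval σ φ ≠ V3.f →
      ∃ ψ o', eval σ ψ = eval σ φ ∧ Tr q ψ a o' ∧ OptR R o o') ∧
  FEquiv (sig p) (sig q)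

/-- `R` is a bisimulation. -/
def IsBisim (R : PT α Act → PT α Act → Prop) : Prop :=
  ∀ p q, R p q → Sim R p q ∧ Sim (fun u v => R v u) q p

/-- Bisimulation equivalence. -/
def Bisim (p q : PT α Act) : Prop := ∃ R, IsBisim R ∧ R p q

end

/-!
Every transition of `p + p'`, `φ :→ p` or `φ ⌃ p` is a transition of `p` or `p'`, guarded by `φ`
or filtered through a signal condition; since bisimilar terms emit equivalent signals, the matching
transitions of `q`, `q'` lift to the compound term on the other side. So a bisimulation relating the
components, extended by the single new pair, is a bisimulation. For `p · p'` the derivatives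
are again sequential compositions, and the witness is `{(x · p', y · q') | x R y} ∪ R'`.
-/

inductive SeqRel {α Act : Type} (R S : PT α Act → PT α Act → Prop) : PT α Act → PT α Act → Prop
  | seq {u v u' v'} : R u v → S u' v' → SeqRel R S (.seq u u') (.seq v v')
  | right {u v} : S u v → SeqRel R S u v

section Congruence

variable {α Act : Type} {R S T : PT α Act → PT α Act → Prop} {p q p' q' u v : PT α Act}

theorem conjT_ne_f_iff {x y : V3} : conjT x y ≠ .f ↔ x ≠ .f ∧ y ≠ .f := by
  cases x <;> cases y <;> simp [conjT]

theorem impT_of_ne_f {x y : V3} (h : x ≠ .f) : impT x y = y := by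
  cases x <;> first | exact absurd rfl h | rfl

theorem not_eqBot_of_eval_ne_f {φ : Fml α} {σ : α → V3} (h : eval σ φ ≠ .f) : ¬ EqBot φ :=
  fun hφ => h (hφ σ)

theorem OptR.mono (hRS : R ≤ S) : ∀ {o o' : Option (PT α Act)}, OptR R o o' → OptR S o o'
  | none, none, _ => trivial
  | some _, some _, h => hRS _ _ h

theorem Sim.mono (hRS : R ≤ S) (h : Sim R p q) : Sim S p q := by
  refine ⟨fun χ a o htr σ hs hχ => ?_, h.2⟩
  obtain ⟨ψ, o', he, ht, ho⟩ := h.1 χ a o htr σ hs hχ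
  exact ⟨ψ, o', he, ht, ho.mono hRS⟩

theorem Sim.alt (h : Sim R p q) (h' : Sim R p' q') : Sim R (.alt p p') (.alt q q') := by
  have hsig : FEquiv (sig (.alt p p')) (sig (.alt q q')) := fun σ => by
    simp only [sig, eval, h.2 σ, h'.2 σ]
  refine ⟨fun χ a o htr σ hs hχ => ?_, hsig⟩
  obtain ⟨hs₁, hs₂⟩ := conjT_ne_f_iff.mp hs
  have hq : ¬ EqBot (sig (.alt q q')) := not_eqBot_of_eval_ne_f (hsig σ ▸ hs)
  cases htr with
  | altL _ ht _ =>
    obtain ⟨ψ, o', he, ht', ho⟩ := h.1 χ a o ht σ hs₁ hχ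
    exact ⟨ψ, o', he, .altL _ ht' hq, ho⟩
  | altR _ ht _ =>
    obtain ⟨ψ, o', he, ht', ho⟩ := h'.1 χ a o ht σ hs₂ hχ
    exact ⟨ψ, o', he, .altR _ ht' hq, ho⟩

theorem Sim.seq (h : Sim R p q) (hT : T p' q') (hsig : FEquiv (sig p') (sig q'))
    (hRT : ∀ u v, R u v → T (.seq u p') (.seq v q')) : Sim T (.seq p p') (.seq q q') := by
  refine ⟨fun χ a o htr σ hs hχ => ?_, h.2⟩
  cases htr with
  | seqT _ ht hp' =>
    obtain ⟨ψ, _ | _, he, ht', ho⟩ := h.1 χ a none ht σ hs hχ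
    · exact ⟨ψ, some q', he, .seqT _ ht' fun hq' => hp' fun τ => (hsig τ).trans (hq' τ), hT⟩
    · exact ho.elim
  | seqS _ ht =>
    obtain ⟨ψ, _ | v', he, ht', ho⟩ := h.1 χ a _ ht σ hs hχ
    · exact ho.elim
    · exact ⟨ψ, some (.seq v' q'), he, .seqS _ ht', hRT _ _ ho⟩

theorem Sim.gc (φ : Fml α) (h : Sim R p q) : Sim R (.gc φ p) (.gc φ q) := by
  refine ⟨fun χ a o htr σ hs hχ => ?_, fun σ => by simp only [sig, eval, h.2 σ]⟩
  cases htr with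
  | @gcR _ χ₀ _ _ _ ht _ =>
    obtain ⟨hχ₀, hφ⟩ := conjT_ne_f_iff.mp hχ
    have hsp : eval σ (sig p) ≠ .f := by rwa [sig, eval, impT_of_ne_f hφ] at hs
    obtain ⟨ψ, o', he, ht', ho⟩ := h.1 _ a o ht σ hsp hχ₀
    have he' : eval σ (ψ.conj φ) = eval σ (χ₀.conj φ) := by simp only [eval, he]
    exact ⟨ψ.conj φ, o', he', .gcR _ ht' (not_eqBot_of_eval_ne_f (he' ▸ hχ)), ho⟩

theorem Sim.se (φ : Fml α) (h : Sim R p q) : Sim R (.se φ p) (.se φ q) := by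
  have hsig : FEquiv (sig (.se φ p)) (sig (.se φ q)) := fun σ => by
    simp only [sig, eval, h.2 σ]
  refine ⟨fun χ a o htr σ hs hχ => ?_, hsig⟩
  cases htr with
  | seR _ ht _ =>
    obtain ⟨ψ, o', he, ht', ho⟩ := h.1 χ a o ht σ (conjT_ne_f_iff.mp hs).2 hχ
    exact ⟨ψ, o', he, .seR _ ht' (not_eqBot_of_eval_ne_f (hsig σ ▸ hs)), ho⟩

theorem IsBisim.sim_of_le (hR : IsBisim R) (hRS : R ≤ S) (huv : R u v) :
    Sim S u v ∧ Sim (flip S) v u :=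
  ⟨(hR u v huv).1.mono hRS, (hR u v huv).2.mono fun x y => hRS y x⟩

theorem IsBisim.sup (hR : IsBisim R) (hS : IsBisim S) : IsBisim (R ⊔ S) := by
  rintro u v (h | h)
  exacts [hR.sim_of_le le_sup_left h, hS.sim_of_le le_sup_right h]

theorem Bisim.of_sim (hR : IsBisim R) (h : Sim R u v) (h' : Sim (flip R) v u) : Bisim u v := by
  refine ⟨R ⊔ fun x y => x = u ∧ y = v, ?_, Or.inr ⟨rfl, rfl⟩⟩
  rintro x y (hxy | ⟨rfl, rfl⟩)
  · exact hR.sim_of_le le_sup_left hxy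
  · exact ⟨h.mono le_sup_left, h'.mono fun a b hab => Or.inl hab⟩

theorem IsBisim.seqRel (hR : IsBisim R) (hS : IsBisim S) : IsBisim (SeqRel R S) := by
  rintro _ _ (⟨huv, hs⟩ | hs)
  · have hsig := (hS _ _ hs).1.2
    exact ⟨(hR _ _ huv).1.seq (.right hs) hsig fun _ _ h => .seq h hs,
      (hR _ _ huv).2.seq (.right hs) (fun σ => (hsig σ).symm) fun _ _ h => .seq h hs⟩
  · exact hS.sim_of_le (fun _ _ => .right) hs

end Congruence

theorem ctBPAps_congruence_general {α Act : Type}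
    (p q p' q' : PT α Act) (φ : Fml α)
    (h : Bisim p q) (h' : Bisim p' q') :
    Bisim (.alt p p') (.alt q q') ∧ Bisim (.seq p p') (.seq q q') ∧
    Bisim (.gc φ p) (.gc φ q) ∧ Bisim (.se φ p) (.se φ q) := by
  obtain ⟨R, hR, hpq⟩ := h
  obtain ⟨R', hR', hpq'⟩ := h'
  obtain ⟨hsim, hsim_symm⟩ := hR.sim_of_le (S := R ⊔ R') le_sup_left hpq
  obtain ⟨hsim', hsim_symm'⟩ := hR'.sim_of_le (S := R ⊔ R') le_sup_right hpq'
  exact ⟨.of_sim (hR.sup hR') (hsim.alt hsim') (hsim_symm.alt hsim_symm'),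
    ⟨SeqRel R R', hR.seqRel hR', .seq hpq hpq'⟩,
    .of_sim hR ((hR p q hpq).1.gc φ) ((hR p q hpq).2.gc φ),
    .of_sim hR ((hR p q hpq).1.se φ) ((hR p q hpq).2.se φ)⟩

/-- Bisimulation equivalence is a congruence for the operators of ctBPAps. -/
theorem ctBPAps_congruence {α Act : Type} [Fintype α] [Fintype Act]
    (p q p' q' : PT α Act) (φ : Fml α)
    (h : Bisim p q) (h' : Bisim p' q') :
    Bisim (.alt p p') (.alt q q') ∧ Bisim (.seq p p') (.seq q q') ∧
    Bisim (.gc φ p) (.gc φ q) ∧ Bisim (.se φ p) (.se φ q) :=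
  ctBPAps_congruence_general p q p' q' φ h h'
end

section
/- Completeness of ctBPAps: for all closed ctBPAps process terms p and q, if p ↔ q (p and q are bisimulation equivalent) then the equation p = q is derivable from the axioms of ctBPAps. -/
set_option autoImplicit true
set_option maxHeartbeats 1000000

/-!
Every term is derivably equal to its head normal form `s ⌃ Σᵢ φᵢ :→ aᵢ·pᵢ`, with `s` its signal
and one summand per transition. For bisimilar `p` and `q` the signals are equivalent and, by
induction on depth, matching successors are derivably equal. Splitting a guard `φ` into the cells
`χ_σ ∧ φ`, one per valuation `σ` of the finitely many atoms, each summand of one normal form is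
either killed by the signal or merged (GC7) into a summand of the other with the same value at `σ`.
Equivalent propositions are identified by IMP, since the Hilbert system is complete (Kalmár).
-/

instance : Fintype V3 := ⟨{.t, .f, .b}, fun v => by cases v <;> decide⟩

def Fml.hasValue {α : Type} : V3 → Fml α → Fml α
  | .t, A => A.conj (A.neg.imp .bot)
  | .b, A => A.conj A.neg
  | .f, A => A.imp .bot

namespace Hilb

open Fml

variable {α : Type} {Γ Δ : Set (Fml α)} {A B C : Fml α}

theorem imp_refl (A : Fml α) : Hilb Γ (A.imp A) :=
  .mp (.mp (.ax2 A (A.imp A) A) (.ax1 A (A.imp A))) (.ax1 A A)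

theorem imp_of_subset_insert (h : Hilb Δ B) (hΔ : Δ ⊆ insert A Γ) : Hilb Γ (A.imp B) := by
  induction h with
  | hyp h =>
    rcases hΔ h with rfl | h
    · exact imp_refl _
    · exact .mp (.ax1 _ _) (.hyp h)
  | mp _ _ ih₁ ih₂ => exact .mp (.mp (.ax2 _ _ _) ih₁) ih₂
  | ax1 P Q => exact .mp (.ax1 _ _) (.ax1 P Q)
  | ax2 P Q R => exact .mp (.ax1 _ _) (.ax2 P Q R)
  | ax3 P Q => exact .mp (.ax1 _ _) (.ax3 P Q)
  | ax4 P => exact .mp (.ax1 _ _) (.ax4 P)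
  | ax5 P Q => exact .mp (.ax1 _ _) (.ax5 P Q)
  | ax6 P Q => exact .mp (.ax1 _ _) (.ax6 P Q)
  | ax7 P Q => exact .mp (.ax1 _ _) (.ax7 P Q)
  | ax8 P Q => exact .mp (.ax1 _ _) (.ax8 P Q)
  | ax9 P Q => exact .mp (.ax1 _ _) (.ax9 P Q)
  | ax10 P Q R => exact .mp (.ax1 _ _) (.ax10 P Q R)
  | ax11 P => exact .mp (.ax1 _ _) (.ax11 P)
  | ax12 P Q => exact .mp (.ax1 _ _) (.ax12 P Q)
  | ax13 P Q => exact .mp (.ax1 _ _) (.ax13 P Q)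
  | ax14 P Q => exact .mp (.ax1 _ _) (.ax14 P Q)
  | ax15 P => exact .mp (.ax1 _ _) (.ax15 P)

theorem deduction (h : Hilb (insert A Γ) B) : Hilb Γ (A.imp B) :=
  imp_of_subset_insert h subset_rfl

theorem mono (hΓ : Γ ⊆ Δ) (h : Hilb Γ B) : Hilb Δ B :=
  .mp (imp_of_subset_insert (A := Fml.bot.imp .bot) h (hΓ.trans (Set.subset_insert _ _)))
    (.ax4 .bot)

theorem weaken (h : Hilb Γ B) : Hilb (insert A Γ) B := mono (Set.subset_insert _ _) h

theorem hyp_insert : Hilb (insert A Γ) A := .hyp (Set.mem_insert _ _)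

theorem conj_intro (h₁ : Hilb Γ A) (h₂ : Hilb Γ B) : Hilb Γ (A.conj B) :=
  .mp (.mp (.ax7 A B) h₁) h₂

theorem conj_left (h : Hilb Γ (A.conj B)) : Hilb Γ A := .mp (.ax5 A B) h

theorem conj_right (h : Hilb Γ (A.conj B)) : Hilb Γ B := .mp (.ax6 A B) h

theorem iff_mp (h : Hilb Γ (iff' A B)) : Hilb Γ (A.imp B) := conj_left h

theorem iff_mpr (h : Hilb Γ (iff' A B)) : Hilb Γ (B.imp A) := conj_right h

theorem imp_trans (h₁ : Hilb Γ (A.imp B)) (h₂ : Hilb Γ (B.imp C)) : Hilb Γ (A.imp C) :=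
  deduction (.mp (weaken h₂) (.mp (weaken h₁) hyp_insert))

theorem of_bot (h : Hilb Γ .bot) : Hilb Γ A := .mp (.ax4 A) h

theorem disj_elim (h : Hilb Γ (A.disj B)) (h₁ : Hilb (insert A Γ) C)
    (h₂ : Hilb (insert B Γ) C) : Hilb Γ C :=
  .mp (.mp (.mp (.ax10 A B C) (deduction h₁)) (deduction h₂)) h

/-- Peirce's law gives the excluded middle for the classical negation `A → ⊥`. -/
theorem disj_imp_bot (A : Fml α) : Hilb Γ (A.disj (A.imp .bot)) :=
  .mp (.ax3 _ .bot) (deduction (.mp (.ax9 _ _) (imp_trans (.ax8 A _) hyp_insert)))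

theorem neg_of_imp_bot (h : Hilb Γ (A.imp .bot)) : Hilb Γ A.neg :=
  disj_elim (.ax15 A) (of_bot (.mp (weaken h) hyp_insert)) hyp_insert

theorem hasValue_neg (u : V3) (h : Hilb Γ (hasValue u A)) :
    Hilb Γ (hasValue (negT u) A.neg) := by
  cases u with
  | t => exact conj_right h
  | b => exact conj_intro (conj_right h) (.mp (iff_mpr (.ax11 A)) (conj_left h))
  | f => exact conj_intro (neg_of_imp_bot h) (imp_trans (iff_mp (.ax11 A)) h)

theorem hasValue_conj (u v : V3) (h₁ : Hilb Γ (hasValue u A)) (h₂ : Hilb Γ (hasValue v B)) :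
    Hilb Γ (hasValue (conjT u v) (A.conj B)) := by
  cases u <;> cases v
  case f.t | f.b | f.f => exact imp_trans (.ax5 A B) h₁
  case t.f | b.f => exact imp_trans (.ax6 A B) h₂
  case t.t =>
    refine conj_intro (conj_intro (conj_left h₁) (conj_left h₂))
      (imp_trans (iff_mp (.ax13 A B)) (deduction ?_))
    exact disj_elim hyp_insert (.mp (weaken (weaken (conj_right h₁))) hyp_insert)
      (.mp (weaken (weaken (conj_right h₂))) hyp_insert)
  case t.b =>
    exact conj_intro (conj_intro (conj_left h₁) (conj_left h₂))
      (.mp (iff_mpr (.ax13 A B)) (.mp (.ax9 _ _) (conj_right h₂)))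
  case b.t | b.b =>
    exact conj_intro (conj_intro (conj_left h₁) (conj_left h₂))
      (.mp (iff_mpr (.ax13 A B)) (.mp (.ax8 _ _) (conj_right h₁)))

theorem hasValue_disj (u v : V3) (h₁ : Hilb Γ (hasValue u A)) (h₂ : Hilb Γ (hasValue v B)) :
    Hilb Γ (hasValue (disjT u v) (A.disj B)) := by
  cases u <;> cases v
  case t.t | t.b | t.f =>
    exact conj_intro (.mp (.ax8 A B) (conj_left h₁))
      (imp_trans (iff_mp (.ax14 A B)) (imp_trans (.ax5 A.neg B.neg) (conj_right h₁)))
  case b.t | f.t =>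
    exact conj_intro (.mp (.ax9 A B) (conj_left h₂))
      (imp_trans (iff_mp (.ax14 A B)) (imp_trans (.ax6 A.neg B.neg) (conj_right h₂)))
  case b.b =>
    exact conj_intro (.mp (.ax8 A B) (conj_left h₁))
      (.mp (iff_mpr (.ax14 A B)) (conj_intro (conj_right h₁) (conj_right h₂)))
  case b.f =>
    exact conj_intro (.mp (.ax8 A B) (conj_left h₁))
      (.mp (iff_mpr (.ax14 A B)) (conj_intro (conj_right h₁) (neg_of_imp_bot h₂)))
  case f.b =>
    exact conj_intro (.mp (.ax9 A B) (conj_left h₂))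
      (.mp (iff_mpr (.ax14 A B)) (conj_intro (neg_of_imp_bot h₁) (conj_right h₂)))
  case f.f => exact .mp (.mp (.ax10 A B .bot) h₁) h₂

theorem hasValue_imp (u v : V3) (h₁ : Hilb Γ (hasValue u A)) (h₂ : Hilb Γ (hasValue v B)) :
    Hilb Γ (hasValue (impT u v) (A.imp B)) := by
  cases u <;> cases v
  case f.t | f.b | f.f =>
    exact conj_intro (imp_trans h₁ (.ax4 B))
      (imp_trans (iff_mp (.ax12 A B)) (imp_trans (.ax5 A B.neg) h₁))
  case t.t | b.t =>
    exact conj_intro (.mp (.ax1 B A) (conj_left h₂))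
      (imp_trans (iff_mp (.ax12 A B)) (imp_trans (.ax6 A B.neg) (conj_right h₂)))
  case t.b | b.b =>
    exact conj_intro (.mp (.ax1 B A) (conj_left h₂))
      (.mp (iff_mpr (.ax12 A B)) (conj_intro (conj_left h₁) (conj_right h₂)))
  case t.f | b.f => exact deduction (.mp (weaken h₂) (.mp hyp_insert (weaken (conj_left h₁))))

theorem hasValue_trichotomy (A : Fml α) :
    Hilb Γ ((hasValue .t A).disj ((hasValue .b A).disj (hasValue .f A))) := by
  refine disj_elim (.ax15 A) (disj_elim (disj_imp_bot A.neg) ?_ ?_)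
    (disj_elim (disj_imp_bot A) ?_ ?_)
  · exact .mp (.ax9 _ _) (.mp (.ax8 _ _) (conj_intro (.hyp (by simp)) hyp_insert))
  · exact .mp (.ax8 _ _) (conj_intro (.hyp (by simp)) hyp_insert)
  · exact .mp (.ax9 _ _) (.mp (.ax8 _ _) (conj_intro hyp_insert (.hyp (by simp))))
  · exact .mp (.ax9 _ _) (.mp (.ax9 _ _) hyp_insert)

theorem by_cases_hasValue (A : Fml α) (h : ∀ v, Hilb (insert (hasValue v A) Γ) C) : Hilb Γ C :=
  .mp (.mp (.mp (.ax10 _ _ _) (deduction (h .t)))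
    (.mp (.mp (.ax10 _ _ _) (deduction (h .b))) (deduction (h .f)))) (hasValue_trichotomy A)

def valueCtx (s : Set α) (σ : α → V3) : Set (Fml α) := (fun x => hasValue (σ x) (var x)) '' s

theorem hasValue_eval (σ : α → V3) (A : Fml α) :
    Hilb (valueCtx Set.univ σ) (hasValue (eval σ A) A) := by
  induction A with
  | var x => exact .hyp ⟨x, trivial, rfl⟩
  | bot => exact .ax4 .bot
  | neg A ih => exact hasValue_neg _ ih
  | conj A B ih₁ ih₂ => exact hasValue_conj _ _ ih₁ ih₂
  | disj A B ih₁ ih₂ => exact hasValue_disj _ _ ih₁ ih₂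
  | imp A B ih₁ ih₂ => exact hasValue_imp _ _ ih₁ ih₂

theorem of_forall_valueCtx_insert {x : α} {s : Set α} (hx : x ∉ s)
    (h : ∀ σ, Hilb (valueCtx (insert x s) σ) C) (σ : α → V3) : Hilb (valueCtx s σ) C := by
  classical
  refine by_cases_hasValue (var x) fun v => ?_
  convert h (Function.update σ x v) using 1
  rw [valueCtx, valueCtx, Set.image_insert_eq, Function.update_self]
  refine congrArg _ (Set.image_congr fun y hy => ?_)
  rw [Function.update_of_ne (ne_of_mem_of_not_mem hy hx)]

theorem of_forall_valueCtx [Fintype α] (h : ∀ σ, Hilb (valueCtx Set.univ σ) C) : Hilb ∅ C := by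
  classical
  suffices ∀ s : Finset α, (∀ σ, Hilb (valueCtx ↑s σ) C) → Hilb ∅ C from
    this Finset.univ (by simpa using h)
  intro s
  induction s using Finset.induction_on with
  | empty => intro h; simpa [valueCtx] using h fun _ => .t
  | insert x s hx ih =>
    exact fun h => ih (of_forall_valueCtx_insert (by simpa using hx) (by simpa using h))

theorem complete [Fintype α] (h : ∀ σ, eval σ A ≠ .f) : Hilb ∅ A := by
  refine of_forall_valueCtx fun σ => ?_
  have hA := hasValue_eval σ A
  cases hv : eval σ A with
  | t => rw [hv] at hA; exact conj_left hA
  | b => rw [hv] at hA; exact conj_left hA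
  | f => exact absurd hv (h σ)

end Hilb

namespace PropEq

variable {α : Type} [Fintype α] {φ ψ : Fml α}

theorem of_fequiv (h : FEquiv φ ψ) : PropEq φ ψ := by
  refine .imp (Hilb.complete fun σ => ?_)
  simp only [InternEq, Fml.iff', eval, h σ]
  cases eval σ ψ <;> decide

theorem of_eqBot (h : EqBot φ) : PropEq φ .bot := of_fequiv fun σ => h σ

end PropEq

namespace Fml

variable {α : Type}

def designated (A : Fml α) : Fml α := (A.imp .bot).neg

def conjList : List (Fml α) → Fml α := List.foldr conj top

def disjList : List (Fml α) → Fml α := List.foldr disj bot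

theorem eval_designated (σ : α → V3) (A : Fml α) :
    eval σ A.designated = if eval σ A = .f then .f else .t := by
  simp only [designated, eval]
  cases eval σ A <;> rfl

theorem eval_hasValue_ne_f_iff (σ : α → V3) (v : V3) (A : Fml α) :
    eval σ (hasValue v A) ≠ .f ↔ eval σ A = v := by
  cases v <;> simp only [hasValue, eval] <;> cases eval σ A <;> decide

theorem eval_conjList_map_designated (σ : α → V3) (l : List (Fml α)) :
    eval σ (conjList (l.map designated)) = if ∀ A ∈ l, eval σ A ≠ .f then .t else .f := by
  induction l with
  | nil => rfl
  | cons A l ih =>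
    simp only [conjList, List.map_cons, List.foldr_cons] at ih ⊢
    simp only [eval, ih, eval_designated, List.forall_mem_cons]
    by_cases hA : eval σ A = .f <;> simp [hA] <;> split_ifs <;> rfl

theorem fequiv_conj_comm (φ ψ : Fml α) : FEquiv (φ.conj ψ) (ψ.conj φ) := fun σ => by
  simp only [eval]
  cases eval σ φ <;> cases eval σ ψ <;> rfl

variable [Fintype α]

noncomputable def charFml (σ : α → V3) : Fml α :=
  conjList ((Finset.univ.toList.map fun x => hasValue (σ x) (var x)).map designated)

theorem eval_charFml (σ σ' : α → V3) : eval σ' (charFml σ) = if σ' = σ then .t else .f := by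
  simp only [charFml, eval_conjList_map_designated, List.forall_mem_map, Finset.mem_toList,
    Finset.mem_univ, forall_const, eval_hasValue_ne_f_iff, eval, funext_iff]

theorem eval_disjList_charFml_conj (φ : Fml α) (σ : α → V3) (l : List (α → V3)) :
    eval σ (disjList (l.map fun σ' => (charFml σ').conj φ)) =
      if σ ∈ l then eval σ φ else .f := by
  induction l with
  | nil => rfl
  | cons σ' l ih =>
    simp only [disjList, List.map_cons, List.foldr_cons] at ih ⊢
    simp only [eval, ih, eval_charFml, List.mem_cons]
    obtain rfl | h := eq_or_ne σ σ' <;> by_cases hl : σ ∈ l <;> simp [*] <;>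
      cases eval σ φ <;> rfl

open Classical in
theorem fequiv_disjList_charFml_conj (φ : Fml α) :
    FEquiv φ (disjList (Finset.univ.toList.map fun σ => (charFml σ).conj φ)) := fun σ => by
  rw [eval_disjList_charFml_conj, if_pos (by simp)]

theorem eqBot_conj_charFml_conj {s φ : Fml α} {σ : α → V3}
    (h : eval σ s = .f ∨ eval σ φ = .f) : EqBot (s.conj ((charFml σ).conj φ)) := fun σ' => by
  simp only [eval, eval_charFml]
  split_ifs with hσ
  · subst hσ
    rcases h with h | h <;> rw [h] <;> cases eval σ' s <;> cases eval σ' φ <;> rfl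
  · cases eval σ' s <;> rfl

theorem fequiv_disj_charFml_conj {ψ φ : Fml α} {σ : α → V3} (h : eval σ ψ = eval σ φ) :
    FEquiv (ψ.disj ((charFml σ).conj φ)) ψ := fun σ' => by
  simp only [eval, eval_charFml]
  split_ifs with hσ
  · subst hσ
    rw [h]
    cases eval σ' φ <;> rfl
  · cases eval σ' ψ <;> rfl

end Fml

section AltSum

variable {α Act : Type}

instance : Trans (Deriv (α := α) (Act := Act)) Deriv Deriv := ⟨Deriv.trans⟩

namespace Deriv

theorem alt_right (x : PT α Act) {y y' : PT α Act} (h : Deriv y y') :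
    Deriv (.alt x y) (.alt x y') := altC (refl x) h

theorem alt_left {x x' : PT α Act} (h : Deriv x x') (y : PT α Act) :
    Deriv (.alt x y) (.alt x' y) := altC h (refl y)

theorem gc_right (φ : Fml α) {x y : PT α Act} (h : Deriv x y) : Deriv (.gc φ x) (.gc φ y) :=
  gcC (.refl φ) h

theorem se_right (φ : Fml α) {x y : PT α Act} (h : Deriv x y) : Deriv (.se φ x) (.se φ y) :=
  seC (.refl φ) h

theorem alt_delta_left (x : PT α Act) : Deriv (.alt .delta x) x := (A1 _ _).trans (A6 x)

theorem alt_left_comm (x y z : PT α Act) : Deriv (.alt x (.alt y z)) (.alt y (.alt x z)) :=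
  calc Deriv (.alt x (.alt y z)) (.alt (.alt x y) z) := (A2 _ _ _).symm
    Deriv _ (.alt (.alt y x) z) := alt_left (A1 _ _) z
    Deriv _ (.alt y (.alt x z)) := A2 _ _ _

end Deriv

def altSum : List (PT α Act) → PT α Act := List.foldr .alt .delta

theorem altSum_append (l₁ l₂ : List (PT α Act)) :
    Deriv (altSum (l₁ ++ l₂)) (.alt (altSum l₁) (altSum l₂)) := by
  induction l₁ with
  | nil => exact (Deriv.alt_delta_left _).symm
  | cons x l ih => exact (Deriv.alt_right x ih).trans (Deriv.A2 _ _ _).symm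

theorem altSum_absorb_of_mem {x : PT α Act} {l : List (PT α Act)} (h : x ∈ l) :
    Deriv (.alt x (altSum l)) (altSum l) := by
  induction l with
  | nil => simp at h
  | cons y l ih =>
    rcases List.mem_cons.mp h with rfl | h
    · exact (Deriv.A2 _ _ _).symm.trans (Deriv.alt_left (Deriv.A3 x) _)
    · exact (Deriv.alt_left_comm _ _ _).trans (Deriv.alt_right y (ih h))

theorem gc_altSum (φ : Fml α) (l : List (PT α Act)) :
    Deriv (.gc φ (altSum l)) (altSum (l.map (.gc φ))) := by
  induction l with
  | nil => exact .GC3 φ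
  | cons x l ih => exact (Deriv.GC4 _ _ _).trans (Deriv.alt_right _ ih)

theorem gc_disjList (L : List (Fml α)) (t : PT α Act) :
    Deriv (.gc (Fml.disjList L) t) (altSum (L.map (.gc · t))) := by
  induction L with
  | nil => exact .GC2 t
  | cons χ L ih => exact (Deriv.GC7 χ _ t).trans (.alt_right _ ih)

theorem seq_altSum (l : List (PT α Act)) (y : PT α Act) :
    Deriv (.seq (altSum l) y) (altSum (l.map (.seq · y))) := by
  induction l with
  | nil => exact .A7 y
  | cons x l ih => exact (Deriv.A4 _ _ _).trans (Deriv.alt_right _ ih)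

theorem altSum_map_deriv_filterMap {β : Type} (l : List β) {g : β → PT α Act}
    {F : β → Option (PT α Act)} (hF : ∀ b, Deriv (g b) ((F b).getD .delta)) :
    Deriv (altSum (l.map g)) (altSum (l.filterMap F)) := by
  induction l with
  | nil => exact .refl _
  | cons b l ih =>
    rw [List.map_cons, List.filterMap_cons]
    cases hb : F b with
    | none => exact (Deriv.altC (by simpa [hb] using hF b) ih).trans (Deriv.alt_delta_left _)
    | some x => exact Deriv.altC (by simpa [hb] using hF b) ih

end AltSum

noncomputable section Steps

open Classical

variable {α Act : Type}

abbrev Step (α Act : Type) := Fml α × Act × Option (PT α Act)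

def seqStep (y : PT α Act) : Step α Act → Option (Step α Act)
  | (φ, a, none) => if EqBot (sig y) then none else some (φ, a, some y)
  | (φ, a, some x') => some (φ, a, some (.seq x' y))

def gcStep (ψ : Fml α) : Step α Act → Option (Step α Act)
  | (φ, a, o) => if EqBot (φ.conj ψ) then none else some (φ.conj ψ, a, o)

def steps : PT α Act → List (Step α Act)
  | .act a => [(Fml.top, a, none)]
  | .delta | .nex => []
  | .alt p q => if EqBot (sig (.alt p q)) then [] else steps p ++ steps q
  | .seq p y => (steps p).filterMap (seqStep y)
  | .gc ψ p => (steps p).filterMap (gcStep ψ)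
  | .se ψ p => if EqBot (sig (.se ψ p)) then [] else steps p

theorem Tr.mem_steps {p : PT α Act} {φ : Fml α} {a : Act} {o : Option (PT α Act)}
    (h : Tr p φ a o) : (φ, a, o) ∈ steps p := by
  induction h with
  | act a => simp [steps]
  | altL y _ hb ih => simpa only [steps, if_neg hb] using List.mem_append_left _ ih
  | altR x _ hb ih => simpa only [steps, if_neg hb] using List.mem_append_right _ ih
  | seqT y _ hb ih => exact List.mem_filterMap.mpr ⟨_, ih, by simp [seqStep, hb]⟩
  | seqS y _ ih => exact List.mem_filterMap.mpr ⟨_, ih, by simp [seqStep]⟩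
  | gcR ψ _ hb ih => exact List.mem_filterMap.mpr ⟨_, ih, by simp [gcStep, hb]⟩
  | seR ψ _ hb ih => simpa only [steps, if_neg hb] using ih

theorem tr_of_mem_steps {p : PT α Act} {φ : Fml α} {a : Act} {o : Option (PT α Act)}
    (h : (φ, a, o) ∈ steps p) : Tr p φ a o := by
  induction p generalizing φ a o with
  | act b =>
    obtain ⟨rfl, rfl, rfl⟩ : φ = Fml.top ∧ a = b ∧ o = none := by simpa [steps] using h
    exact .act a
  | delta | nex => simp [steps] at h
  | alt p q ihp ihq =>
    simp only [steps] at h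
    split_ifs at h with hb
    · simp at h
    · rcases List.mem_append.mp h with h | h
      exacts [.altL q (ihp h) hb, .altR p (ihq h) hb]
  | seq p y ihp _ =>
    obtain ⟨⟨φ', a', _ | x'⟩, hmem, hs⟩ := List.mem_filterMap.mp h <;>
      simp only [seqStep] at hs
    · split_ifs at hs with hy
      obtain ⟨rfl, rfl, rfl⟩ := by simpa using hs
      exact .seqT y (ihp hmem) hy
    · obtain ⟨rfl, rfl, rfl⟩ := by simpa using hs
      exact .seqS y (ihp hmem)
  | gc ψ p ih =>
    obtain ⟨⟨φ', a', o'⟩, hmem, hs⟩ := List.mem_filterMap.mp h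
    simp only [gcStep] at hs
    split_ifs at hs with hb
    obtain ⟨rfl, rfl, rfl⟩ := by simpa using hs
    exact .gcR ψ (ih hmem) hb
  | se ψ p ih =>
    simp only [steps] at h
    split_ifs at h with hb
    · simp at h
    · exact .seR ψ (ih h) hb

def actPrefix (a : Act) : Option (PT α Act) → PT α Act
  | none => .act a
  | some r => .seq (.act a) r

def summand : Step α Act → PT α Act
  | (φ, a, o) => .gc φ (actPrefix a o)

def stepSum (p : PT α Act) : PT α Act := altSum ((steps p).map summand)

theorem seq_summand {y : PT α Act} (hy : EqBot (sig y) → Deriv y .nex) (e : Step α Act) :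
    Deriv (.seq (summand e) y) (((seqStep y e).map summand).getD .delta) := by
  obtain ⟨φ, a, _ | x'⟩ := e
  · by_cases hb : EqBot (sig y)
    · simpa [seqStep, summand, actPrefix, hb] using (Deriv.GC5 φ _ _).symm.trans
        ((Deriv.gc_right φ ((Deriv.seqC (.refl _) (hy hb)).trans (.NE3 a))).trans (.GC3 φ))
    · simpa [seqStep, summand, actPrefix, hb] using (Deriv.GC5 φ _ _).symm
  · exact (Deriv.GC5 φ _ _).symm.trans (Deriv.gc_right φ (.A5 _ _ _))

variable [Fintype α]

theorem Deriv.se_nex_of_eqBot {φ : Fml α} (h : EqBot φ) (x : PT α Act) :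
    Deriv (.se φ x) .nex :=
  (Deriv.seC (.of_eqBot h) (.refl x)).trans (.SE2 x)

theorem gc_summand (ψ : Fml α) (e : Step α Act) :
    Deriv (.gc ψ (summand e)) (((gcStep ψ e).map summand).getD .delta) := by
  obtain ⟨φ, a, o⟩ := e
  have hgc : Deriv (.gc ψ (summand (φ, a, o))) (.gc (φ.conj ψ) (actPrefix a o)) :=
    (Deriv.GC6 ψ φ _).trans (.gcC (.of_fequiv (Fml.fequiv_conj_comm ψ φ)) (.refl _))
  by_cases hb : EqBot (φ.conj ψ)
  · simpa [gcStep, hb] using hgc.trans ((Deriv.gcC (.of_eqBot hb) (.refl _)).trans (.GC2 _))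
  · simpa [gcStep, summand, hb] using hgc

theorem deriv_se_stepSum (p : PT α Act) : Deriv p (.se (sig p) (stepSum p)) := by
  induction p with
  | act a => exact ((Deriv.SE1 _).trans ((Deriv.A6 _).trans (.GC1 _))).symm
  | delta => exact (Deriv.SE1 _).symm
  | nex => exact (Deriv.SE2 _).symm
  | alt p q ihp ihq =>
    have h : Deriv (.alt p q) (.se (sig (.alt p q)) (.alt (stepSum p) (stepSum q))) :=
      calc Deriv (.alt p q) (.alt (.se (sig p) (stepSum p)) (.se (sig q) (stepSum q))) :=
            .altC ihp ihq
        Deriv _ (.se (sig p) (.alt (.se (sig q) (stepSum q)) (stepSum p))) :=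
            (Deriv.SE4 _ _ _).trans (.se_right _ (.A1 _ _))
        Deriv _ (.se (sig p) (.se (sig q) (.alt (stepSum q) (stepSum p)))) :=
            .se_right _ (.SE4 _ _ _)
        Deriv _ (.se (sig (.alt p q)) (.alt (stepSum p) (stepSum q))) :=
            (Deriv.SE6 _ _ _).trans (.se_right _ (.A1 _ _))
    by_cases hb : EqBot (sig (.alt p q))
    · exact h.trans ((Deriv.se_nex_of_eqBot hb _).trans (Deriv.se_nex_of_eqBot hb _).symm)
    · simpa [stepSum, steps, hb] using h.trans (.se_right _ (altSum_append _ _).symm)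
  | seq p y ihp ihy =>
    calc Deriv (.seq p y) (.se (sig p) (.seq (stepSum p) y)) :=
          (Deriv.seqC ihp (.refl y)).trans (.SE5 _ _ _)
      Deriv _ (.se (sig p) (stepSum (.seq p y))) := by
        refine .se_right _ ((seq_altSum _ y).trans ?_)
        rw [stepSum, steps, List.map_filterMap, List.map_map]
        exact altSum_map_deriv_filterMap _
          (seq_summand fun hb => ihy.trans (Deriv.se_nex_of_eqBot hb _))
  | gc ψ p ih =>
    calc Deriv (.gc ψ p) (.se (ψ.imp (sig p)) (.gc ψ (stepSum p))) :=
          (Deriv.gc_right ψ ih).trans (.SE8 _ _ _)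
      Deriv _ (.se (sig (.gc ψ p)) (stepSum (.gc ψ p))) := by
        refine .se_right _ ((gc_altSum ψ _).trans ?_)
        rw [stepSum, steps, List.map_filterMap, List.map_map]
        exact altSum_map_deriv_filterMap _ (gc_summand ψ)
  | se ψ p ih =>
    have h : Deriv (.se ψ p) (.se (sig (.se ψ p)) (stepSum p)) :=
      (Deriv.se_right ψ ih).trans (.SE6 _ _ _)
    by_cases hb : EqBot (sig (.se ψ p))
    · exact h.trans ((Deriv.se_nex_of_eqBot hb _).trans (Deriv.se_nex_of_eqBot hb _).symm)
    · simpa [stepSum, steps, hb] using h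

end Steps

section Depth

variable {α Act : Type}

def depth : PT α Act → ℕ
  | .act _ => 1
  | .delta | .nex => 0
  | .alt p q => max (depth p) (depth q)
  | .seq p q => depth p + depth q
  | .gc _ p | .se _ p => depth p

theorem Tr.depth_pos {p : PT α Act} {φ : Fml α} {a : Act} {o : Option (PT α Act)}
    (h : Tr p φ a o) : 0 < depth p := by
  induction h <;> simp only [depth] at * <;> omega

theorem Tr.depth_lt {p : PT α Act} {φ : Fml α} {a : Act} {o : Option (PT α Act)}
    (h : Tr p φ a o) : ∀ p' ∈ o, depth p' < depth p := by
  induction h with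
  | act => simp
  | altL _ _ _ ih | altR _ _ _ ih =>
    intro p' hp'
    have := ih p' hp'
    simp only [depth]
    omega
  | seqT _ hx =>
    simp only [Option.mem_def, Option.some.injEq, forall_eq', depth]
    have := hx.depth_pos
    omega
  | seqS _ _ ih =>
    simp only [Option.mem_def, Option.some.injEq, forall_eq', depth]
    have := ih _ rfl
    omega
  | gcR _ _ _ ih | seR _ _ _ ih => exact ih

theorem Sim.mono_of_depth_lt {R R' : PT α Act → PT α Act → Prop} {p q : PT α Act}
    (h : Sim R p q)
    (hR : ∀ p' q', depth p' < depth p → depth q' < depth q → R p' q' → R' p' q') :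
    Sim R' p q := by
  refine ⟨fun φ a o hp σ hs hφ => ?_, h.2⟩
  obtain ⟨ψ, o', hψ, hq, ho⟩ := h.1 φ a o hp σ hs hφ
  refine ⟨ψ, o', hψ, hq, ?_⟩
  rcases o with _ | p' <;> rcases o' with _ | q' <;> simp only [OptR] at ho ⊢
  exact hR p' q' (hp.depth_lt p' rfl) (hq.depth_lt q' rfl) ho

end Depth

section Absorption

variable {α Act : Type}

theorem se_alt_altSum_absorb {s : Fml α} {W : PT α Act} {xs : List (PT α Act)}
    (h : ∀ x ∈ xs, Deriv (.se s (.alt x W)) (.se s W)) :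
    Deriv (.se s (.alt (altSum xs) W)) (.se s W) := by
  induction xs with
  | nil => exact .se_right s (.alt_delta_left W)
  | cons x xs ih =>
    have ih := ih fun y hy => h y (List.mem_cons_of_mem x hy)
    calc Deriv (.se s (.alt (altSum (x :: xs)) W)) (.se s (.alt (.alt (altSum xs) W) x)) :=
          .se_right s ((Deriv.A2 _ _ _).trans (.A1 _ _))
      Deriv _ (.alt (.se s W) x) := (Deriv.SE4 _ _ _).symm.trans (.alt_left ih x)
      Deriv _ (.se s W) :=
          (Deriv.SE4 _ _ _).trans ((Deriv.se_right s (.A1 _ _)).trans (h x List.mem_cons_self))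

theorem actPrefix_congr (a : Act) {o o' : Option (PT α Act)} (h : OptR Deriv o o') :
    Deriv (actPrefix a o) (actPrefix a o') := by
  rcases o with _ | p <;> rcases o' with _ | q <;> simp only [OptR] at h
  · exact .refl _
  · exact .seqC (.refl _) h

variable [Fintype α]

theorem se_alt_gc_absorb_of_eqBot {s χ : Fml α} (h : EqBot (s.conj χ)) (t W : PT α Act) :
    Deriv (.se s (.alt (.gc χ t) W)) (.se s W) :=
  calc Deriv (.se s (.alt (.gc χ t) W)) (.se s (.alt (.gc (s.conj χ) t) (.gc s W))) :=
        (Deriv.SE7 s _).symm.trans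
          (.se_right s ((Deriv.GC4 _ _ _).trans (.alt_left (.GC6 _ _ _) _)))
    Deriv _ (.se s (.gc s W)) := .se_right s <|
        (Deriv.alt_left ((Deriv.gcC (.of_eqBot h) (.refl t)).trans (.GC2 t)) _).trans
          (.alt_delta_left _)
    Deriv _ (.se s W) := .SE7 s W

theorem alt_gc_absorb_of_disj {ψ χ : Fml α} {t W : PT α Act}
    (hW : Deriv (.alt (.gc ψ t) W) W) (h : FEquiv (ψ.disj χ) ψ) : Deriv (.alt (.gc χ t) W) W :=
  calc Deriv (.alt (.gc χ t) W) (.alt (.alt (.gc ψ t) (.gc χ t)) W) :=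
        (Deriv.alt_right _ hW.symm).trans ((Deriv.alt_left_comm _ _ _).trans (Deriv.A2 _ _ _).symm)
    Deriv _ (.alt (.gc ψ t) W) :=
        .alt_left ((Deriv.GC7 ψ χ t).symm.trans (.gcC (.of_fequiv h) (.refl t))) W
    Deriv _ W := hW

def Covers (W : PT α Act) (s φ : Fml α) (t : PT α Act) : Prop :=
  ∀ σ, eval σ s ≠ .f → eval σ φ ≠ .f → ∃ ψ, eval σ ψ = eval σ φ ∧ Deriv (.alt (.gc ψ t) W) W

open Classical in
theorem se_alt_gc_absorb {W : PT α Act} {s φ : Fml α} {t : PT α Act} (h : Covers W s φ t) :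
    Deriv (.se s (.alt (.gc φ t) W)) (.se s W) := by
  have hsplit := (Deriv.gcC (.of_fequiv (Fml.fequiv_disjList_charFml_conj φ)) (.refl t)).trans
    (gc_disjList _ t)
  refine (Deriv.se_right s (.alt_left hsplit W)).trans (se_alt_altSum_absorb ?_)
  simp only [List.mem_map]
  rintro _ ⟨_, ⟨σ, -, rfl⟩, rfl⟩
  by_cases hσ : eval σ s = .f ∨ eval σ φ = .f
  · exact se_alt_gc_absorb_of_eqBot (Fml.eqBot_conj_charFml_conj hσ) t W
  · rw [not_or] at hσ
    obtain ⟨ψ, hψ, hW⟩ := h σ hσ.1 hσ.2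
    exact .se_right s (alt_gc_absorb_of_disj hW (Fml.fequiv_disj_charFml_conj hψ))

theorem se_absorb_of_sim {p q : PT α Act} (h : Sim Deriv p q) :
    Deriv (.se (sig p) (.alt (stepSum p) (stepSum q))) (.se (sig p) (stepSum q)) := by
  refine se_alt_altSum_absorb ?_
  simp only [stepSum, List.mem_map]
  rintro _ ⟨⟨φ, a, o⟩, hstep, rfl⟩
  refine se_alt_gc_absorb fun σ hs hφ => ?_
  obtain ⟨ψ, o', hψ, hq, ho⟩ := h.1 φ a o (tr_of_mem_steps hstep) σ hs hφ
  refine ⟨ψ, hψ, (Deriv.alt_left (.gc_right ψ (actPrefix_congr a ho)) _).trans ?_⟩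
  exact altSum_absorb_of_mem (List.mem_map_of_mem (f := summand) hq.mem_steps)

theorem deriv_of_sim_of_sim {p q : PT α Act} (hpq : Sim Deriv p q) (hqp : Sim Deriv q p) :
    Deriv p q :=
  have hsig : PropEq (sig p) (sig q) := .of_fequiv hpq.2
  calc Deriv p (.se (sig p) (stepSum p)) := deriv_se_stepSum p
    Deriv _ (.se (sig q) (.alt (stepSum q) (stepSum p))) :=
        (Deriv.seC hsig (.refl _)).trans (se_absorb_of_sim hqp).symm
    Deriv _ (.se (sig p) (stepSum q)) :=
        (Deriv.seC hsig.symm (.A1 _ _)).trans (se_absorb_of_sim hpq)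
    Deriv _ q := (Deriv.seC hsig (.refl _)).trans (deriv_se_stepSum q).symm

end Absorption

theorem ctBPAps_completeness_general {α Act : Type} [Fintype α]
    (p q : PT α Act) (h : Bisim p q) : Deriv p q := by
  induction hn : depth p + depth q using Nat.strong_induction_on generalizing p q with
  | _ n ih =>
    obtain ⟨R, hR, hpq⟩ := h
    have hsucc : ∀ p' q', depth p' < depth p → depth q' < depth q → R p' q' → Deriv p' q' :=
      fun p' q' hp hq hr => ih _ (by omega) p' q' ⟨R, hR, hr⟩ rfl
    obtain ⟨hsim, hsim'⟩ := hR p q hpq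
    exact deriv_of_sim_of_sim (hsim.mono_of_depth_lt hsucc)
      (hsim'.mono_of_depth_lt fun q' p' hq hp hr => (hsucc p' q' hp hq hr).symm)

/-- Completeness of ctBPAps with respect to bisimulation equivalence. -/
theorem ctBPAps_completeness {α Act : Type} [Fintype α] [Fintype Act]
    (p q : PT α Act) (h : Bisim p q) : Deriv p q :=
  ctBPAps_completeness_general p q h
end
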